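/- arXiv:1707.09027 — 10 statements merged into one kernel-verified Lean document; each statement's English description precedes it below -/
import Mathlib

section
/- Every topological group that is a P-space (countable intersections of open sets are open) is non-archimedean, i.e., has a local base at the identity consisting of open subgroups. -/
open Filter Set Topology Pointwise

universe u v

/-- A P-space: countable intersections of open sets are open. -/
def IsPSpace (X : Type*) [TopologicalSpace X] : Prop :=
  ∀ s : ℕ → Set X, (∀ n, IsOpen (s n)) → IsOpen (⋂ n, s n)

/-- A uniform P-space: countable intersections of entourages are entourages. -/
def IsUniformPSpace (X : Type*) [UniformSpace X] : Prop :=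
  ∀ s : ℕ → Set (X × X), (∀ n, s n ∈ uniformity X) → (⋂ n, s n) ∈ uniformity X

/-- The left uniformity of a topological group, as a filter on `G × G`. -/
def leftUnif (G : Type*) [Group G] [TopologicalSpace G] : Filter (G × G) :=
  Filter.comap (fun p : G × G => p.1⁻¹ * p.2) (nhds 1)

/-- The right uniformity of a topological group, as a filter on `G × G`. -/
def rightUnif (G : Type*) [Group G] [TopologicalSpace G] : Filter (G × G) :=
  Filter.comap (fun p : G × G => p.1 * p.2⁻¹) (nhds 1)

/-- The two-sided uniformity (supremum of left and right uniformities). -/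
def twoSidedUnif (G : Type*) [Group G] [TopologicalSpace G] : Filter (G × G) :=
  leftUnif G ⊓ rightUnif G

/-- `ε` belongs to the trace of the filter `μ` on the subset `B`. -/
def MemTrace {G : Type*} (μ : Filter (G × G)) (B : Set G) (ε : Set (G × G)) : Prop :=
  ∃ δ ∈ μ, δ ∩ B ×ˢ B = ε ∩ B ×ˢ B

/-- `f : B → ℝ` is uniformly continuous for the trace on `B` of the filter `μ` on `G × G`. -/
def UCOn {G : Type*} (μ : Filter (G × G)) (B : Set G) (f : B → ℝ) : Prop :=
  ∀ e : ℝ, 0 < e → ∃ δ ∈ μ, ∀ x y : B, ((x : G), (y : G)) ∈ δ → |f x - f y| < e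

/-- `ε` is an equivalence relation on the subset `B`. -/
def IsEquivOn {G : Type*} (B : Set G) (ε : Set (G × G)) : Prop :=
  (∀ x ∈ B, (x, x) ∈ ε) ∧ (∀ x ∈ B, ∀ y ∈ B, (x, y) ∈ ε → (y, x) ∈ ε) ∧
    (∀ x ∈ B, ∀ y ∈ B, ∀ z ∈ B, (x, y) ∈ ε → (y, z) ∈ ε → (x, z) ∈ ε)

/-- The relation `ε` has at most `c` equivalence classes on `B`. -/
def ClassesLE {G : Type*} (B : Set G) (ε : Set (G × G)) (c : Cardinal) : Prop :=
  Cardinal.mk ↥(Set.range fun x : B => {y : B | ((x : G), (y : G)) ∈ ε}) ≤ c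

/-- The symmetric subset `B` of a topological group `G` is functionally balanced. -/
def FunBalancedOn (G : Type*) [Group G] [TopologicalSpace G] (B : Set G) : Prop :=
  ∀ f : B → ℝ, (∃ M : ℝ, ∀ x : B, |f x| ≤ M) →
    UCOn (leftUnif G) B f → UCOn (rightUnif G) B f

/-- The symmetric subset `B` of a topological group `G` is strongly functionally balanced. -/
def StronglyFunBalancedOn (G : Type*) [Group G] [TopologicalSpace G] (B : Set G) : Prop :=
  ∀ f : B → ℝ, UCOn (leftUnif G) B f → UCOn (rightUnif G) B f

/-- A non-archimedean topological group: open subgroups form a base at the identity. -/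
def IsNonArchGroup (G : Type*) [Group G] [TopologicalSpace G] : Prop :=
  ∀ U ∈ nhds (1 : G), ∃ H : Subgroup G, IsOpen (H : Set G) ∧ (H : Set G) ⊆ U

/-- Words of length at most `n` in the free group. -/
def Bword (X : Type*) [DecidableEq X] (n : ℕ) : Set (FreeGroup X) :=
  {w : FreeGroup X | w.toWord.length ≤ n}

/-- The given group topology on `FreeGroup X` makes it the uniform free topological group
over the uniform space `X`: the canonical map is uniformly continuous (for the two-sided
uniformity) and every uniformly continuous map to a topological group extends to a
continuous homomorphism. -/
def IsUniformFreeTopGroup (X : Type u) [UniformSpace X] [TopologicalSpace (FreeGroup X)]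
    [IsTopologicalGroup (FreeGroup X)] : Prop :=
  Filter.Tendsto (Prod.map (FreeGroup.of : X → FreeGroup X) FreeGroup.of) (uniformity X)
      (twoSidedUnif (FreeGroup X)) ∧
    ∀ (G : Type u) [Group G] [TopologicalSpace G] [IsTopologicalGroup G] (φ : X → G),
      Filter.Tendsto (Prod.map φ φ) (uniformity X) (twoSidedUnif G) →
        Continuous ⇑(FreeGroup.lift φ)

/-- The given group topology on `FreeGroup X` makes it the free non-archimedean balanced
topological group over the uniform space `X`. -/
def IsFreeNABalancedGroup (X : Type u) [UniformSpace X] [TopologicalSpace (FreeGroup X)]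
    [IsTopologicalGroup (FreeGroup X)] : Prop :=
  IsNonArchGroup (FreeGroup X) ∧ leftUnif (FreeGroup X) = rightUnif (FreeGroup X) ∧
    Filter.Tendsto (Prod.map (FreeGroup.of : X → FreeGroup X) FreeGroup.of) (uniformity X)
      (twoSidedUnif (FreeGroup X)) ∧
    ∀ (G : Type u) [Group G] [TopologicalSpace G] [IsTopologicalGroup G] (φ : X → G),
      IsNonArchGroup G → leftUnif G = rightUnif G →
      Filter.Tendsto (Prod.map φ φ) (uniformity X) (twoSidedUnif G) →
        Continuous ⇑(FreeGroup.lift φ)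

/-!
Given a neighbourhood `U` of `1`, choose neighbourhoods `U = V₀ ⊇ V₁ ⊇ ⋯` of `1` with
`Vₙ₊₁ / Vₙ₊₁ ⊆ Vₙ`. Their intersection is closed under `x, y ↦ x / y`, hence a subgroup, and in a
P-space it is again a neighbourhood of `1`, hence an open subgroup inside `U`.
-/

theorem IsPSpace.countableInterFilter_nhds {X : Type*} [TopologicalSpace X] (hX : IsPSpace X)
    (x : X) : CountableInterFilter (𝓝 x) where
  countable_sInter_mem S hS hmem := by
    rcases S.eq_empty_or_nonempty with rfl | hne
    · simp
    obtain ⟨s, rfl⟩ := hS.exists_eq_range hne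
    have hs : ∀ n, s n ∈ 𝓝 x := fun n => hmem _ (mem_range_self n)
    rw [sInter_range]
    refine mem_of_superset ?_ (iInter_mono fun n => interior_subset (s := s n))
    exact (hX _ fun _ => isOpen_interior).mem_nhds
      (mem_iInter.2 fun n => mem_interior_iff_mem_nhds.2 (hs n))

theorem Subgroup.exists_coe_eq_iInter_of_div_mem {G : Type*} [Group G] {V : ℕ → Set G}
    (h1 : ∀ n, (1 : G) ∈ V n) (hdiv : ∀ n, ∀ x ∈ V (n + 1), ∀ y ∈ V (n + 1), x / y ∈ V n) :
    ∃ H : Subgroup G, (H : Set G) = ⋂ n, V n :=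
  ⟨Subgroup.ofDiv (⋂ n, V n) ⟨1, mem_iInter.2 h1⟩ fun x hx y hy =>
      mem_iInter.2 fun n => div_eq_mul_inv x y ▸
        hdiv n x (mem_iInter.1 hx (n + 1)) y (mem_iInter.1 hy (n + 1)), rfl⟩

theorem exists_div_chain_nhds_one {G : Type*} [Group G] [TopologicalSpace G]
    [IsTopologicalGroup G] {U : Set G} (hU : U ∈ 𝓝 (1 : G)) :
    ∃ V : ℕ → Set G, V 0 = U ∧ (∀ n, V n ∈ 𝓝 (1 : G)) ∧
      ∀ n, ∀ x ∈ V (n + 1), ∀ y ∈ V (n + 1), x / y ∈ V n := by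
  choose! split split_mem split_div using fun s (hs : s ∈ 𝓝 (1 : G)) => exists_nhds_split_inv hs
  have hmem : ∀ n, split^[n] U ∈ 𝓝 (1 : G) := by
    intro n
    induction n with
    | zero => exact hU
    | succ n ih => exact Function.iterate_succ_apply' split n U ▸ split_mem _ ih
  refine ⟨fun n => split^[n] U, rfl, hmem, fun n => ?_⟩
  simpa only [Function.iterate_succ_apply'] using split_div _ (hmem n)

theorem isNonArchGroup_of_countableInterFilter {G : Type*} [Group G] [TopologicalSpace G]
    [IsTopologicalGroup G] [CountableInterFilter (𝓝 (1 : G))] : IsNonArchGroup G := by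
  intro U hU
  obtain ⟨V, rfl, hV, hdiv⟩ := exists_div_chain_nhds_one hU
  obtain ⟨H, hH⟩ := Subgroup.exists_coe_eq_iInter_of_div_mem (fun n => mem_of_mem_nhds (hV n)) hdiv
  have hH_nhds : (H : Set G) ∈ 𝓝 (1 : G) := hH ▸ countable_iInter_mem.2 hV
  exact ⟨H, H.isOpen_of_mem_nhds hH_nhds, hH ▸ iInter_subset V 0⟩

/-- every topological group which is a P-space is non-archimedean. -/
theorem pGroup_isNonArch (G : Type*) [Group G] [TopologicalSpace G] [IsTopologicalGroup G]
    (hP : IsPSpace G) : IsNonArchGroup G :=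
  have := hP.countableInterFilter_nhds 1
  isNonArchGroup_of_countableInterFilter
end

section
/- If (X, U) is a uniform P-space, then it is non-archimedean: for every entourage ε ∈ U there exists an equivalence relation δ ∈ U with δ ⊆ ε. -/
open Filter Set Topology Pointwise

universe u v

open scoped Uniformity SetRel

/-! Halving ε repeatedly gives symmetric entourages `U₀ ⊆ ε` with `U (n+1) ○ U (n+1) ⊆ U n`.
Their intersection is an entourage by the P-space property, and it is transitive because a
two-step chain in `U (n+1)` lands in `U n`. -/

theorem SetRel.isTrans_iInter_of_comp_subset {α : Type*} {R : ℕ → SetRel α α}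
    (hR : ∀ n, R (n + 1) ○ R (n + 1) ⊆ R n) : SetRel.IsTrans (⋂ n, R n) where
  trans _ _ _ hab hbc := mem_iInter.2 fun n =>
    hR n ⟨_, mem_iInter.1 hab (n + 1), mem_iInter.1 hbc (n + 1)⟩

theorem exists_seq_symm_comp_subset_of_mem_uniformity {α : Type*} [UniformSpace α]
    {V : SetRel α α} (hV : V ∈ 𝓤 α) :
    ∃ U : ℕ → SetRel α α, (∀ n, U n ∈ 𝓤 α) ∧ (∀ n, (U n).IsSymm) ∧ U 0 ⊆ V ∧
      ∀ n, U (n + 1) ○ U (n + 1) ⊆ U n := by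
  choose! half half_mem half_symm half_comp using
    fun W (hW : W ∈ 𝓤 α) => comp_symm_mem_uniformity_sets hW
  have iterate_mem : ∀ n, half^[n] V ∈ 𝓤 α := fun n => by
    induction n with
    | zero => exact hV
    | succ n ih => rw [Function.iterate_succ_apply']; exact half_mem _ ih
  refine ⟨fun n => half^[n + 1] V, fun n => iterate_mem (n + 1), ?_, ?_, fun n => ?_⟩
  · intro n
    dsimp only
    rw [Function.iterate_succ_apply']
    exact half_symm _ (iterate_mem n)
  · have := isRefl_of_mem_uniformity (half_mem V hV)
    exact SetRel.left_subset_comp.trans (half_comp V hV)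
  · dsimp only
    rw [Function.iterate_succ_apply' _ (n + 1)]
    exact half_comp _ (iterate_mem (n + 1))

/-- a uniform P-space is non-archimedean. -/
theorem uniformPSpace_nonArch (X : Type*) [UniformSpace X] (hP : IsUniformPSpace X)
    (ε : Set (X × X)) (hε : ε ∈ uniformity X) :
    ∃ δ ∈ uniformity X, δ ⊆ ε ∧ (∀ x : X, (x, x) ∈ δ) ∧
      (∀ x y : X, (x, y) ∈ δ → (y, x) ∈ δ) ∧
      (∀ x y z : X, (x, y) ∈ δ → (y, z) ∈ δ → (x, z) ∈ δ) := by
  obtain ⟨U, hU, hU_symm, hU_sub, hU_comp⟩ := exists_seq_symm_comp_subset_of_mem_uniformity hε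
  have := fun n => isRefl_of_mem_uniformity (hU n)
  have : SetRel.IsTrans (⋂ n, U n) := SetRel.isTrans_iInter_of_comp_subset hU_comp
  exact ⟨⋂ n, U n, hP U hU, (iInter_subset U 0).trans hU_sub, fun _ => SetRel.rfl _,
    fun _ _ => SetRel.symm _, fun _ _ _ => SetRel.trans _⟩
end

section
/- Let τ be an infinite cardinal and G a topological group in which the intersection of any family of at most τ open sets is open. If G is τ-bounded, then G is balanced (its left and right uniformities coincide). -/
open Filter Set Topology Pointwise

universe u v

/-! Choose `W ∈ 𝓝 1` with `W⁻¹ W W ⊆ U` and `F` with `|F| ≤ τ` and `F * W = G`. Writing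
`g⁻¹ = f * w` gives `g x g⁻¹ = w⁻¹ (f⁻¹ x f) w`, so the intersection `V` of the at most `τ`
neighborhoods `f W f⁻¹`, `f ∈ F`, which is again a neighborhood of `1`, satisfies `g V g⁻¹ ⊆ U`
for every `g`. Conjugation is thus equicontinuous at `1`, and this is what makes the left and
right uniformities coincide. -/

theorem iInter_mem_nhds_of_card_le {X : Type*} [TopologicalSpace X] {τ : Cardinal.{u}}
    (hopen : ∀ (ι : Type u) (s : ι → Set X), Cardinal.mk ι ≤ τ →
      (∀ i, IsOpen (s i)) → IsOpen (⋂ i, s i))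
    {ι : Type u} {s : ι → Set X} (hι : Cardinal.mk ι ≤ τ) {x : X} (hs : ∀ i, s i ∈ 𝓝 x) :
    ⋂ i, s i ∈ 𝓝 x := by
  have hint : ⋂ i, interior (s i) ∈ 𝓝 x :=
    (hopen ι _ hι fun _ ↦ isOpen_interior).mem_nhds
      (mem_iInter.2 fun i ↦ mem_interior_iff_mem_nhds.2 (hs i))
  exact mem_of_superset hint (iInter_mono fun _ ↦ interior_subset)

section TopologicalGroup

variable {G : Type*} [Group G] [TopologicalSpace G] [IsTopologicalGroup G]

theorem rightUnif_eq_comap_mul_inv : rightUnif G = comap (fun p : G × G ↦ p.2 * p.1⁻¹) (𝓝 1) := by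
  conv_rhs => rw [← nhds_one_symm G, comap_comap]
  simp only [rightUnif, Function.comp_def, mul_inv_rev, inv_inv]

theorem leftUnif_eq_rightUnif_of_tendsto_conj
    (h : Tendsto (fun gx : G × G ↦ gx.1 * gx.2 * gx.1⁻¹) (comap Prod.snd (𝓝 1)) (𝓝 1)) :
    leftUnif G = rightUnif G := by
  rw [rightUnif_eq_comap_mul_inv, leftUnif]
  apply le_antisymm
  · rw [← tendsto_iff_comap]
    have := h.comp (tendsto_comap_iff.2 tendsto_comap :
      Tendsto (fun p : G × G ↦ (p.1, p.1⁻¹ * p.2)) (comap (fun p ↦ p.1⁻¹ * p.2) (𝓝 1)) _)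
    simpa [Function.comp_def, mul_assoc] using this
  · rw [← tendsto_iff_comap]
    have := h.comp (tendsto_comap_iff.2 tendsto_comap :
      Tendsto (fun p : G × G ↦ (p.1⁻¹, p.2 * p.1⁻¹)) (comap (fun p ↦ p.2 * p.1⁻¹) (𝓝 1)) _)
    simpa [Function.comp_def, mul_assoc] using this

theorem exists_mem_nhds_one_forall_inv_mul_mul_mem {U : Set G} (hU : U ∈ 𝓝 (1 : G)) :
    ∃ W ∈ 𝓝 (1 : G), ∀ w ∈ W, ∀ x ∈ W, w⁻¹ * x * w ∈ U := by
  have hcont : Tendsto (fun p : G × G ↦ p.1⁻¹ * p.2 * p.1) (𝓝 1 ×ˢ 𝓝 1) (𝓝 1) := by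
    rw [← nhds_prod_eq]
    exact (by fun_prop : Continuous fun p : G × G ↦ p.1⁻¹ * p.2 * p.1).tendsto' _ _ (by simp)
  exact eventually_prod_self_iff.1 (hcont.eventually hU)

end TopologicalGroup

theorem tendsto_conj_nhds_one_of_tauBounded {G : Type u} [Group G] [TopologicalSpace G]
    [IsTopologicalGroup G] {τ : Cardinal.{u}}
    (hopen : ∀ (ι : Type u) (s : ι → Set G), Cardinal.mk ι ≤ τ →
      (∀ i, IsOpen (s i)) → IsOpen (⋂ i, s i))
    (hbdd : ∀ U ∈ 𝓝 (1 : G), ∃ F : Set G, Cardinal.mk ↥F ≤ τ ∧ F * U = univ) :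
    Tendsto (fun gx : G × G ↦ gx.1 * gx.2 * gx.1⁻¹) (comap Prod.snd (𝓝 1)) (𝓝 1) := by
  intro U hU
  obtain ⟨W, hW, hWU⟩ := exists_mem_nhds_one_forall_inv_mul_mul_mem hU
  obtain ⟨F, hF, hFW⟩ := hbdd W hW
  have hconjW : ∀ f : G, (fun x ↦ f⁻¹ * x * f) ⁻¹' W ∈ 𝓝 1 := fun f ↦
    (by fun_prop : Continuous fun x : G ↦ f⁻¹ * x * f).tendsto' _ _ (by simp) hW
  refine mem_comap.2 ⟨_, iInter_mem_nhds_of_card_le hopen hF fun f : F ↦ hconjW f,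
    fun ⟨g, x⟩ hx ↦ ?_⟩
  obtain ⟨f, hf, w, hw, hfw⟩ : g⁻¹ ∈ F * W := hFW ▸ mem_univ g⁻¹
  have hfx : f⁻¹ * x * f ∈ W := mem_iInter.1 hx ⟨f, hf⟩
  have hconj : g * x * g⁻¹ = w⁻¹ * (f⁻¹ * x * f) * w := by
    rw [← inv_inv g, ← hfw]
    group
  show g * x * g⁻¹ ∈ U
  rw [hconj]
  exact hWU w hw _ hfx

theorem tauBounded_balanced_general (G : Type u) [Group G] [TopologicalSpace G] [IsTopologicalGroup G]
    (τ : Cardinal.{u})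
    (hopen : ∀ (ι : Type u) (s : ι → Set G), Cardinal.mk ι ≤ τ →
      (∀ i, IsOpen (s i)) → IsOpen (⋂ i, s i))
    (hbdd : ∀ U ∈ nhds (1 : G), ∃ F : Set G, Cardinal.mk ↥F ≤ τ ∧ F * U = Set.univ) :
    leftUnif G = rightUnif G :=
  leftUnif_eq_rightUnif_of_tendsto_conj (tendsto_conj_nhds_one_of_tauBounded hopen hbdd)

/-- a τ-bounded group in which τ-fold intersections of open sets are open
is balanced. -/
theorem tauBounded_balanced (G : Type u) [Group G] [TopologicalSpace G] [IsTopologicalGroup G]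
    (τ : Cardinal.{u}) (hτ : Cardinal.aleph0 ≤ τ)
    (hopen : ∀ (ι : Type u) (s : ι → Set G), Cardinal.mk ι ≤ τ →
      (∀ i, IsOpen (s i)) → IsOpen (⋂ i, s i))
    (hbdd : ∀ U ∈ nhds (1 : G), ∃ F : Set G, Cardinal.mk ↥F ≤ τ ∧ F * U = Set.univ) :
    leftUnif G = rightUnif G :=
  tauBounded_balanced_general G τ hopen hbdd
end

section
/- Every ℵ₀-bounded P-group is balanced. -/
open Filter Set Topology Pointwise

universe u v

/-!
In a P-group, if `Vₙ` are identity neighbourhoods with `Vₙ₊₁ / Vₙ₊₁ ⊆ Vₙ`, then `⋂ₙ Vₙ` is a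
subgroup that is again a neighbourhood of `1`, so open subgroups form a base at `1`. An open
subgroup `H` of an ℵ₀-bounded group is covered by countably many cosets `f H`, so its normal core
`⋂_f f H f⁻¹` is a countable intersection of neighbourhoods of `1`, hence open. Thus open normal
subgroups form a base at `1`, and for a normal subgroup `N` the conditions `x⁻¹ y ∈ N` and
`x y⁻¹ ∈ N` coincide, which identifies the left and right uniformities.
-/

theorem IsPSpace.countableInterFilter_nhds_s3 {X : Type*} [TopologicalSpace X] (hP : IsPSpace X)
    (x : X) : CountableInterFilter (𝓝 x) := by
  refine ⟨fun S hS hSx => ?_⟩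
  obtain ⟨f, hf⟩ := (hS.insert univ).exists_eq_range (insert_nonempty _ _)
  have hfx : ∀ n, f n ∈ 𝓝 x := fun n => by
    rcases (hf ▸ mem_range_self n : f n ∈ insert univ S) with h | h
    · exact h ▸ univ_mem
    · exact hSx _ h
  have hx : ⋂ n, interior (f n) ∈ 𝓝 x :=
    (hP _ fun _ => isOpen_interior).mem_nhds
      (mem_iInter.2 fun n => mem_interior_iff_mem_nhds.2 (hfx n))
  refine mem_of_superset hx fun y hy s hs => ?_
  obtain ⟨n, rfl⟩ : s ∈ range f := hf ▸ mem_insert_of_mem _ hs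
  exact interior_subset (mem_iInter.1 hy n)

section

variable {G : Type*} [Group G] [TopologicalSpace G]

theorem NonarchimedeanGroup.of_countableInterFilter_nhds_one [IsTopologicalGroup G]
    [CountableInterFilter (𝓝 (1 : G))] : NonarchimedeanGroup G := by
  refine ⟨fun U hU => ?_⟩
  choose! half half_mem div_mem_of_mem_half using fun s (hs : s ∈ 𝓝 (1 : G)) =>
    exists_nhds_split_inv hs
  set V : ℕ → Set G := fun n => half^[n] U
  have hV : ∀ n, V n ∈ 𝓝 1 := fun n => by
    induction n with
    | zero => exact hU
    | succ n ih => simpa only [V, Function.iterate_succ_apply'] using half_mem _ ih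
  have hV_div : ∀ n, ∀ x ∈ V (n + 1), ∀ y ∈ V (n + 1), x / y ∈ V n := fun n => by
    simpa only [V, Function.iterate_succ_apply'] using div_mem_of_mem_half _ (hV n)
  let H : Subgroup G :=
    Subgroup.ofDiv (⋂ n, V n) ⟨1, mem_iInter.2 fun n => mem_of_mem_nhds (hV n)⟩
      fun x hx y hy => mem_iInter.2 fun n => by
        simpa only [div_eq_mul_inv] using hV_div n x (mem_iInter.1 hx _) y (mem_iInter.1 hy _)
  have hH : (H : Set G) ∈ 𝓝 1 := countable_iInter_mem.2 hV
  exact ⟨⟨H, H.isOpen_of_mem_nhds hH⟩, iInter_subset V 0⟩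

theorem Subgroup.normalCore_mem_nhds_one [ContinuousMul G] [CountableInterFilter (𝓝 (1 : G))]
    {H : Subgroup G} (hH : (H : Set G) ∈ 𝓝 1) {F : Set G} (hF : F.Countable)
    (hFH : F * (H : Set G) = univ) : (H.normalCore : Set G) ∈ 𝓝 1 := by
  have hconj : ∀ f : G, ∀ᶠ a in 𝓝 (1 : G), f⁻¹ * a * f ∈ H := fun f =>
    ((continuous_const_mul f⁻¹).mul continuous_const).tendsto' 1 1 (by simp) hH
  filter_upwards [(eventually_countable_ball hF).2 fun f _ => hconj f] with a ha b
  obtain ⟨f, hf, h, hh, hfh⟩ : b⁻¹ ∈ F * H := hFH ▸ mem_univ _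
  have hb : b = h⁻¹ * f⁻¹ := by rw [← mul_inv_rev, ← inv_inv b]; exact congrArg _ hfh.symm
  rw [hb, show h⁻¹ * f⁻¹ * a * (h⁻¹ * f⁻¹)⁻¹ = h⁻¹ * (f⁻¹ * a * f) * h by group]
  exact H.mul_mem (H.mul_mem (H.inv_mem hh) (ha f hf)) hh

theorem leftUnif_eq_rightUnif_of_exists_normal_subgroup_subset
    (h : ∀ U ∈ 𝓝 (1 : G), ∃ N : Subgroup G, N.Normal ∧ (N : Set G) ∈ 𝓝 1 ∧ (N : Set G) ⊆ U) :
    leftUnif G = rightUnif G := by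
  have hB : (𝓝 (1 : G)).HasBasis (fun N : Subgroup G => N.Normal ∧ (N : Set G) ∈ 𝓝 1) (↑) :=
    ⟨fun U => ⟨fun hU => (h U hU).imp fun _ hN => ⟨⟨hN.1, hN.2.1⟩, hN.2.2⟩,
      fun ⟨_, hN, hNU⟩ => mem_of_superset hN.2 hNU⟩⟩
  -- `p.1 * p.2⁻¹` is the conjugate of `(p.1⁻¹ * p.2)⁻¹` by `p.1`
  have hpre : ∀ N : Subgroup G, N.Normal →
      (fun p : G × G => p.1 * p.2⁻¹) ⁻¹' N = (fun p : G × G => p.1⁻¹ * p.2) ⁻¹' N := by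
    intro N hN
    ext p
    simp only [mem_preimage, SetLike.mem_coe]
    rw [← N.inv_mem_iff, hN.mem_comm_iff, mul_inv_rev, inv_inv]
  exact (hB.comap _).ext (hB.comap _) (fun N hN => ⟨N, hN, (hpre N hN.1).le⟩)
    fun N hN => ⟨N, hN, (hpre N hN.1).ge⟩

end

/-- an ℵ₀-bounded P-group is balanced. -/
theorem aleph0Bounded_pGroup_balanced (G : Type*) [Group G] [TopologicalSpace G]
    [IsTopologicalGroup G] (hP : IsPSpace G)
    (hbdd : ∀ U ∈ nhds (1 : G), ∃ F : Set G, F.Countable ∧ F * U = Set.univ) :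
    leftUnif G = rightUnif G := by
  have := hP.countableInterFilter_nhds_s3 1
  have := NonarchimedeanGroup.of_countableInterFilter_nhds_one (G := G)
  refine leftUnif_eq_rightUnif_of_exists_normal_subgroup_subset fun U hU => ?_
  obtain ⟨H, hHU⟩ := NonarchimedeanGroup.is_nonarchimedean U hU
  obtain ⟨F, hF, hFH⟩ := hbdd H H.mem_nhds_one
  exact ⟨H.normalCore, H.normalCore_normal, Subgroup.normalCore_mem_nhds_one H.mem_nhds_one hF hFH,
    (SetLike.coe_subset_coe.2 H.normalCore_le).trans hHU⟩
end

section
/- Let (X, U) be a uniform P-space. A function f : X → ℝ is uniformly continuous if and only if there exists an entourage ε ∈ U such that (x, y) ∈ ε implies f(x) = f(y). -/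
open Filter Set Topology Pointwise

universe u v

/-- `(uniformity β).ker`, the inseparability relation, is the intersection of a countable basis of
entourages. -/
theorem IsUniformPSpace.preimage_ker_uniformity_mem {X β : Type*} [UniformSpace X]
    [UniformSpace β] [(uniformity β).IsCountablyGenerated] (hP : IsUniformPSpace X) {f : X → β}
    (hf : UniformContinuous f) : Prod.map f f ⁻¹' (uniformity β).ker ∈ uniformity X := by
  obtain ⟨s, hs⟩ := (uniformity β).exists_antitone_basis
  simp only [hs.1.ker, iInter_true, preimage_iInter]
  exact hP _ fun n => hf (hs.mem n)

theorem IsUniformPSpace.exists_mem_uniformity_eq_of_uniformContinuous {X β : Type*}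
    [UniformSpace X] [UniformSpace β] [T0Space β] [(uniformity β).IsCountablyGenerated]
    (hP : IsUniformPSpace X) {f : X → β} (hf : UniformContinuous f) :
    ∃ ε ∈ uniformity X, ∀ x y : X, (x, y) ∈ ε → f x = f y :=
  ⟨_, hP.preimage_ker_uniformity_mem hf, fun _ _ hxy =>
    (inseparable_iff_ker_uniformity.2 hxy).eq⟩

theorem uniformContinuous_of_eq_on_mem_uniformity {X β : Type*} [UniformSpace X]
    [UniformSpace β] {f : X → β} {ε : Set (X × X)} (hε : ε ∈ uniformity X)
    (hf : ∀ x y : X, (x, y) ∈ ε → f x = f y) : UniformContinuous f :=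
  fun _ hV => mem_map.2 <| mem_of_superset hε fun p hp => by
    simpa only [mem_preimage, Prod.map_apply, hf p.1 p.2 hp] using refl_mem_uniformity hV

/-- on a uniform P-space, a real-valued function is uniformly continuous iff
it is constant on some entourage. -/
theorem uniformPSpace_uc_iff (X : Type*) [UniformSpace X] (hP : IsUniformPSpace X)
    (f : X → ℝ) :
    UniformContinuous f ↔ ∃ ε ∈ uniformity X, ∀ x y : X, (x, y) ∈ ε → f x = f y :=
  ⟨hP.exists_mem_uniformity_eq_of_uniformContinuous, fun ⟨_, hε, hf⟩ =>
    uniformContinuous_of_eq_on_mem_uniformity hε hf⟩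
end

section
/- Let G be a P-group and B ⊆ G a symmetric subset. A function f : B → ℝ is uniformly continuous with respect to the trace of the left uniformity of G on B if and only if there exists an open subgroup H of G such that f is constant on B ∩ xH for every x ∈ B. -/
/-!
In a P-group the neighbourhoods of the identity are closed under countable intersections.
Intersecting a sequence `Vₙ` of neighbourhoods with `Vₙ₊₁ Vₙ₊₁⁻¹ ⊆ Vₙ` therefore yields an
open subgroup, so open subgroups form a base at the identity and the left uniformity is
generated by the relations `x⁻¹ y ∈ H`. A left uniformly continuous `f` then gives, for each
`n`, an open subgroup `Hₙ` on whose left cosets `f` oscillates by less than `1 / (n + 1)`;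
the intersection of the `Hₙ` is again open, and `f` is constant on its cosets.
-/

open Filter Set Topology Pointwise

universe u v

theorem IsPSpace.iInter_mem_nhds {X : Type*} [TopologicalSpace X] (hP : IsPSpace X) {x : X}
    {s : ℕ → Set X} (hs : ∀ n, s n ∈ 𝓝 x) : ⋂ n, s n ∈ 𝓝 x := by
  choose t hts ht hxt using fun n => mem_nhds_iff.1 (hs n)
  exact mem_of_superset ((hP t ht).mem_nhds (mem_iInter.2 hxt)) (iInter_mono hts)

theorem IsPSpace.isOpen_iInf_subgroup {G : Type*} [Group G] [TopologicalSpace G]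
    (hP : IsPSpace G) {H : ℕ → Subgroup G} (hH : ∀ n, IsOpen (H n : Set G)) :
    IsOpen ((⨅ n, H n : Subgroup G) : Set G) := by
  rw [Subgroup.coe_iInf]
  exact hP _ hH

section TopologicalGroup

variable {G : Type*} [Group G] [TopologicalSpace G] [IsTopologicalGroup G]

theorem exists_mem_nhds_one_mul_inv_subset {W : Set G} (hW : W ∈ 𝓝 (1 : G)) :
    ∃ V ∈ 𝓝 (1 : G), ∀ v ∈ V, ∀ w ∈ V, v * w⁻¹ ∈ W := by
  obtain ⟨V, hV, hVW⟩ := exists_nhds_one_split hW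
  exact ⟨V ∩ V⁻¹, inter_mem hV (inv_mem_nhds_one G hV),
    fun v hv w hw => hVW v hv.1 w⁻¹ hw.2⟩

theorem IsPSpace.isNonArchGroup (hP : IsPSpace G) : IsNonArchGroup G := by
  intro U hU
  choose half hhalf_nhds hhalf_sub using fun W : {W : Set G // W ∈ 𝓝 (1 : G)} =>
    exists_mem_nhds_one_mul_inv_subset W.2
  let V : ℕ → {W : Set G // W ∈ 𝓝 (1 : G)} := fun n =>
    (fun W => ⟨half W, hhalf_nhds W⟩)^[n] ⟨U, hU⟩
  have hV_succ (n : ℕ) : (V (n + 1) : Set G) = half (V n) :=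
    congrArg Subtype.val (Function.iterate_succ_apply' _ n _)
  have hK : ⋂ n, (V n : Set G) ∈ 𝓝 (1 : G) := hP.iInter_mem_nhds fun n => (V n).2
  let K : Subgroup G := Subgroup.ofDiv (⋂ n, (V n : Set G)) ⟨1, mem_of_mem_nhds hK⟩ <| by
    intro a ha b hb
    refine mem_iInter.2 fun n => hhalf_sub (V n) a ?_ b ?_
    · rw [← hV_succ]; exact mem_iInter.1 ha (n + 1)
    · rw [← hV_succ]; exact mem_iInter.1 hb (n + 1)
  have hK_coe : (K : Set G) = ⋂ n, (V n : Set G) := rfl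
  refine ⟨K, K.isOpen_of_mem_nhds (g := 1) (hK_coe ▸ hK), ?_⟩
  rw [hK_coe]
  exact iInter_subset (fun n => (V n : Set G)) 0

end TopologicalGroup

theorem IsNonArchGroup.exists_subgroup_of_mem_leftUnif {G : Type*} [Group G]
    [TopologicalSpace G] (hG : IsNonArchGroup G) {δ : Set (G × G)} (hδ : δ ∈ leftUnif G) :
    ∃ H : Subgroup G, IsOpen (H : Set G) ∧ ∀ x y : G, x⁻¹ * y ∈ H → (x, y) ∈ δ := by
  obtain ⟨U, hU, hUδ⟩ := mem_comap.1 hδ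
  obtain ⟨H, hHo, hHU⟩ := hG U hU
  exact ⟨H, hHo, fun x y hxy => hUδ (hHU hxy)⟩

theorem IsNonArchGroup.ucOn_leftUnif_iff {G : Type*} [Group G] [TopologicalSpace G]
    (hG : IsNonArchGroup G) {B : Set G} {f : B → ℝ} :
    UCOn (leftUnif G) B f ↔ ∀ e : ℝ, 0 < e → ∃ H : Subgroup G, IsOpen (H : Set G) ∧
      ∀ x y : B, (x : G)⁻¹ * y ∈ H → |f x - f y| < e := by
  refine forall₂_congr fun e he => ⟨fun ⟨δ, hδ, hfδ⟩ => ?_, fun ⟨H, hHo, hfH⟩ => ?_⟩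
  · obtain ⟨H, hHo, hHδ⟩ := hG.exists_subgroup_of_mem_leftUnif hδ
    exact ⟨H, hHo, fun x y hxy => hfδ x y (hHδ x y hxy)⟩
  · exact ⟨_, preimage_mem_comap (hHo.mem_nhds H.one_mem), hfH⟩

theorem IsPSpace.exists_subgroup_eq_of_forall_pos {G : Type*} [Group G] [TopologicalSpace G]
    (hP : IsPSpace G) {B : Set G} {f : B → ℝ}
    (hf : ∀ e : ℝ, 0 < e → ∃ H : Subgroup G, IsOpen (H : Set G) ∧
      ∀ x y : B, (x : G)⁻¹ * y ∈ H → |f x - f y| < e) :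
    ∃ H : Subgroup G, IsOpen (H : Set G) ∧ ∀ x y : B, (x : G)⁻¹ * y ∈ H → f x = f y := by
  choose H hHo hfH using fun n : ℕ => hf (1 / (n + 1)) Nat.one_div_pos_of_nat
  refine ⟨⨅ n, H n, hP.isOpen_iInf_subgroup hHo, fun x y hxy => ?_⟩
  refine eq_of_forall_dist_le fun e he => ?_
  obtain ⟨n, hn⟩ := exists_nat_one_div_lt he
  exact (hfH n x y (Subgroup.mem_iInf.1 hxy n)).le.trans hn.le

theorem forall_mem_leftCoset_iff {G α : Type*} [Group G] {B : Set G} {H : Subgroup G}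
    {f : B → α} :
    (∀ x y z : B, (y : G) ∈ (x : G) • (H : Set G) → (z : G) ∈ (x : G) • (H : Set G) →
      f y = f z) ↔ ∀ y z : B, (y : G)⁻¹ * z ∈ H → f y = f z := by
  simp only [mem_leftCoset_iff, SetLike.mem_coe]
  refine ⟨fun h y z hyz => h y y z (by simp) hyz, fun h x y z hy hz => h y z ?_⟩
  simpa [mul_assoc] using H.mul_mem (H.inv_mem hy) hz

theorem pGroup_luc_iff_general (G : Type*) [Group G] [TopologicalSpace G] [IsTopologicalGroup G]
    (hP : IsPSpace G) (B : Set G) (f : B → ℝ) :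
    UCOn (leftUnif G) B f ↔
      ∃ H : Subgroup G, IsOpen (H : Set G) ∧
        ∀ x y z : B, (y : G) ∈ (x : G) • (H : Set G) → (z : G) ∈ (x : G) • (H : Set G) →
          f y = f z := by
  rw [hP.isNonArchGroup.ucOn_leftUnif_iff]
  simp only [forall_mem_leftCoset_iff]
  refine ⟨hP.exists_subgroup_eq_of_forall_pos, fun ⟨H, hHo, hfH⟩ e he => ⟨H, hHo, ?_⟩⟩
  intro x y hxy
  simpa [hfH x y hxy] using he

/-- for a symmetric subset `B` of a P-group `G`, a function `f : B → ℝ` is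
left-trace uniformly continuous iff it is constant on `B ∩ xH` for some open subgroup `H`. -/
theorem pGroup_luc_iff (G : Type*) [Group G] [TopologicalSpace G] [IsTopologicalGroup G]
    (hP : IsPSpace G) (B : Set G) (hB : B⁻¹ = B) (f : B → ℝ) :
    UCOn (leftUnif G) B f ↔
      ∃ H : Subgroup G, IsOpen (H : Set G) ∧
        ∀ x y z : B, (y : G) ∈ (x : G) • (H : Set G) → (z : G) ∈ (x : G) • (H : Set G) →
          f y = f z :=
  pGroup_luc_iff_general G hP B f
end

section
/- Let G be a P-group and B a symmetric subset of G. Suppose every equivalence relation in the trace of the left uniformity of G on B with at most continuum-many equivalence classes belongs to the trace of the right uniformity. Then B is strongly functionally balanced: every (not necessarily bounded) real-valued left-uniformly continuous function on B is right-uniformly continuous. -/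
/-!
In a P-group countable intersections of identity neighbourhoods are neighbourhoods, so the left
uniformity is closed under countable intersections. A left-uniformly continuous `f : B → ℝ` is
therefore constant on the trace of a single left entourage (intersect the entourages for the
errors `1/(n+1)`). Its kernel is then an equivalence relation in the left trace with at most `𝔠`
classes (they are fibres of `f`), so by hypothesis it lies in the right trace: `f` is constant on
the trace of a right entourage, and in particular right-uniformly continuous.
-/

open Filter Set Topology Pointwise

universe u v

namespace IsPSpace

variable {X : Type*} [TopologicalSpace X]

theorem iInter_mem_nhds_s7 (hP : IsPSpace X) {x : X} {s : ℕ → Set X} (hs : ∀ n, s n ∈ 𝓝 x) :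
    ⋂ n, s n ∈ 𝓝 x := by
  choose t hts ht hxt using fun n => mem_nhds_iff.1 (hs n)
  exact mem_of_superset ((hP t ht).mem_nhds (mem_iInter.2 hxt)) (iInter_mono hts)

theorem countableInterFilter_nhds_s7 (hP : IsPSpace X) (x : X) : CountableInterFilter (𝓝 x) where
  countable_sInter_mem S hS hSx := by
    rcases S.eq_empty_or_nonempty with rfl | hne
    · simp
    obtain ⟨s, rfl⟩ := hS.exists_eq_range hne
    rw [sInter_range]
    exact hP.iInter_mem_nhds_s7 fun n => hSx _ (mem_range_self n)

theorem countableInterFilter_leftUnif {G : Type*} [Group G] [TopologicalSpace G]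
    (hP : IsPSpace G) : CountableInterFilter (leftUnif G) := by
  have := hP.countableInterFilter_nhds_s7 (1 : G)
  unfold leftUnif
  infer_instance

end IsPSpace

section KernelRelation

variable {G α : Type*} {B : Set G}

def kerRel (B : Set G) (f : B → α) : Set (G × G) :=
  {p | ∃ (h₁ : p.1 ∈ B) (h₂ : p.2 ∈ B), f ⟨p.1, h₁⟩ = f ⟨p.2, h₂⟩}

theorem mk_mem_kerRel {f : B → α} {x y : B} : ((x : G), (y : G)) ∈ kerRel B f ↔ f x = f y :=
  ⟨fun ⟨_, _, h⟩ => h, fun h => ⟨x.2, y.2, h⟩⟩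

theorem kerRel_subset (f : B → α) : kerRel B f ⊆ B ×ˢ B :=
  fun _ ⟨h₁, h₂, _⟩ => ⟨h₁, h₂⟩

theorem isEquivOn_kerRel (f : B → α) : IsEquivOn B (kerRel B f) :=
  ⟨fun _ hx => ⟨hx, hx, rfl⟩, fun _ hx _ hy ⟨_, _, h⟩ => ⟨hy, hx, h.symm⟩,
    fun _ hx _ _ _ hz ⟨_, _, h⟩ ⟨_, _, h'⟩ => ⟨hx, hz, h.trans h'⟩⟩

theorem memTrace_kerRel_iff {μ : Filter (G × G)} {f : B → α} :
    MemTrace μ B (kerRel B f) ↔ ∃ δ ∈ μ, ∀ x y : B, ((x : G), (y : G)) ∈ δ → f x = f y := by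
  constructor
  · rintro ⟨δ, hδ, hδε⟩
    refine ⟨δ, hδ, fun x y hxy => mk_mem_kerRel.1 ?_⟩
    have : ((x : G), (y : G)) ∈ δ ∩ B ×ˢ B := ⟨hxy, x.2, y.2⟩
    exact (hδε ▸ this).1
  · rintro ⟨δ, hδ, hδf⟩
    refine ⟨δ ∪ kerRel B f, mem_of_superset hδ subset_union_left, ?_⟩
    rw [union_inter_distrib_right, union_eq_right]
    rintro ⟨x, y⟩ ⟨hxy, hx, hy⟩
    exact ⟨mk_mem_kerRel.2 (hδf ⟨x, hx⟩ ⟨y, hy⟩ hxy), hx, hy⟩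

theorem classesLE_kerRel (f : B → ℝ) : ClassesLE B (kerRel B f) Cardinal.continuum := by
  have hclasses : (range fun x : B => {y : B | ((x : G), (y : G)) ∈ kerRel B f}) ⊆
      range fun r : ℝ => f ⁻¹' {r} := by
    rintro _ ⟨x, rfl⟩
    exact ⟨f x, by ext y; simp [mk_mem_kerRel, eq_comm]⟩
  refine (Cardinal.mk_le_mk_of_subset hclasses).trans ?_
  simpa [Cardinal.mk_real] using Cardinal.mk_range_le_lift (f := fun r : ℝ => f ⁻¹' {r})

end KernelRelation

section UniformContinuity

variable {G : Type*} {μ : Filter (G × G)} {B : Set G} {f : B → ℝ}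

theorem UCOn.exists_mem_forall_eq [CountableInterFilter μ] (hf : UCOn μ B f) :
    ∃ δ ∈ μ, ∀ x y : B, ((x : G), (y : G)) ∈ δ → f x = f y := by
  choose δ hδ hδf using fun n : ℕ => hf (1 / (n + 1)) Nat.one_div_pos_of_nat
  refine ⟨⋂ n, δ n, countable_iInter_mem.2 hδ, fun x y hxy => eq_of_forall_dist_le fun e he => ?_⟩
  obtain ⟨n, hn⟩ := exists_nat_one_div_lt he
  rw [Real.dist_eq]
  exact ((hδf n x y (mem_iInter.1 hxy n)).trans hn).le

theorem ucOn_of_mem_forall_eq (h : ∃ δ ∈ μ, ∀ x y : B, ((x : G), (y : G)) ∈ δ → f x = f y) :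
    UCOn μ B f := by
  obtain ⟨δ, hδ, hδf⟩ := h
  exact fun e he => ⟨δ, hδ, fun x y hxy => by simpa [hδf x y hxy] using he⟩

end UniformContinuity

theorem equivRel_cond_implies_stronglyFunBalanced_general (G : Type*) [Group G] [TopologicalSpace G]
    (hP : IsPSpace G) (B : Set G)
    (hcond : ∀ ε : Set (G × G), ε ⊆ B ×ˢ B → IsEquivOn B ε →
      MemTrace (leftUnif G) B ε → ClassesLE B ε Cardinal.continuum →
        MemTrace (rightUnif G) B ε) :
    StronglyFunBalancedOn G B := by
  intro f hf
  have := hP.countableInterFilter_leftUnif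
  have hleft : MemTrace (leftUnif G) B (kerRel B f) :=
    memTrace_kerRel_iff.2 hf.exists_mem_forall_eq
  exact ucOn_of_mem_forall_eq <| memTrace_kerRel_iff.1 <|
    hcond _ (kerRel_subset f) (isEquivOn_kerRel f) hleft (classesLE_kerRel f)

/-- if every equivalence relation in the left trace uniformity on `B` with at
most 𝔠 classes belongs to the right trace uniformity, then `B` is strongly functionally
balanced. -/
theorem equivRel_cond_implies_stronglyFunBalanced (G : Type*) [Group G] [TopologicalSpace G]
    [IsTopologicalGroup G] (hP : IsPSpace G) (B : Set G) (hB : B⁻¹ = B)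
    (hcond : ∀ ε : Set (G × G), ε ⊆ B ×ˢ B → IsEquivOn B ε →
      MemTrace (leftUnif G) B ε → ClassesLE B ε Cardinal.continuum →
        MemTrace (rightUnif G) B ε) :
    StronglyFunBalancedOn G B :=
  equivRel_cond_implies_stronglyFunBalanced_general G hP B hcond
end

section
/- Let (X, U) be a uniform space and τ an infinite cardinal such that U is closed under intersections of families of at most τ entourages. Then the intersection of any family of at most τ open subsets of the uniform free topological group F(X, U) is open; in particular F(X, U) is a P-group. -/
open Filter Set Topology Pointwise

universe u v

/-! The τ-P-modification of a topology is generated by the intersections of at most τ open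
sets. For a group topology it is again a group topology, and `FreeGroup.of` stays uniformly
continuous into it because the uniformity of `X` is closed under such intersections. The
universal property then makes the identity of `F(X, U)` continuous into the τ-P-modification,
so the topology of `F(X, U)` was already closed under such intersections. -/

section PModification

open TopologicalSpace

universe w

variable {α β : Type*}

@[reducible]
def pModification (t : TopologicalSpace α) (τ : Cardinal.{w}) : TopologicalSpace α :=
  generateFrom {s | ∃ (ι : Type w) (u : ι → Set α), Cardinal.mk ι ≤ τ ∧
    (∀ i, IsOpen[t] (u i)) ∧ s = ⋂ i, u i}

theorem isOpen_pModification_iInter (t : TopologicalSpace α) {τ : Cardinal.{w}} {ι : Type w}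
    {u : ι → Set α} (hι : Cardinal.mk ι ≤ τ) (hu : ∀ i, IsOpen[t] (u i)) :
    IsOpen[pModification t τ] (⋂ i, u i) :=
  isOpen_generateFrom_of_mem ⟨ι, u, hι, hu, rfl⟩

theorem continuous_pModification {t : TopologicalSpace α} {t' : TopologicalSpace β}
    {f : α → β} (hf : Continuous[t, t'] f) (τ : Cardinal.{w}) :
    Continuous[pModification t τ, pModification t' τ] f := by
  refine continuous_generateFrom_iff.2 ?_
  rintro _ ⟨ι, u, hι, hu, rfl⟩
  rw [preimage_iInter]
  exact isOpen_pModification_iInter t hι fun i => (hu i).preimage hf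

theorem pModification_prod_le (t₁ : TopologicalSpace α) (t₂ : TopologicalSpace β)
    (τ : Cardinal.{w}) :
    @instTopologicalSpaceProd α β (pModification t₁ τ) (pModification t₂ τ) ≤
      pModification (@instTopologicalSpaceProd α β t₁ t₂) τ := by
  refine le_generateFrom_iff_subset_isOpen.2 ?_
  rintro _ ⟨ι, w, hι, hw, rfl⟩
  refine (@isOpen_prod_iff α β (pModification t₁ τ) (pModification t₂ τ) _).2 fun a b hab => ?_
  have hbox : ∀ i, ∃ u v : Set _, IsOpen[t₁] u ∧ IsOpen[t₂] v ∧ a ∈ u ∧ b ∈ v ∧ u ×ˢ v ⊆ w i :=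
    fun i => (@isOpen_prod_iff α β t₁ t₂ _).1 (hw i) a b (mem_iInter.1 hab i)
  choose u v hu hv hau hbv huv using hbox
  refine ⟨⋂ i, u i, ⋂ i, v i, isOpen_pModification_iInter t₁ hι hu,
    isOpen_pModification_iInter t₂ hι hv, mem_iInter.2 hau, mem_iInter.2 hbv, ?_⟩
  exact fun p hp => mem_iInter.2 fun i =>
    huv i ⟨mem_iInter.1 hp.1 i, mem_iInter.1 hp.2 i⟩

theorem isTopologicalGroup_pModification {G : Type*} [Group G] [t : TopologicalSpace G]
    [IsTopologicalGroup G] (τ : Cardinal.{w}) :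
    @IsTopologicalGroup G (pModification t τ) _ := by
  have hmul : Continuous[@instTopologicalSpaceProd G G (pModification t τ) (pModification t τ),
      pModification t τ] (fun p : G × G => p.1 * p.2) :=
    continuous_le_dom (pModification_prod_le t t τ) (continuous_pModification continuous_mul τ)
  exact @IsTopologicalGroup.mk G (pModification t τ) _
    (@ContinuousMul.mk G (pModification t τ) _ hmul) (@ContinuousInv.mk G (pModification t τ) _ (continuous_pModification continuous_inv τ))

theorem tendsto_nhds_pModification {γ : Type*} {l : Filter γ} {τ : Cardinal.{w}}
    (hl : ∀ (ι : Type w) (s : ι → Set γ), Cardinal.mk ι ≤ τ → (∀ i, s i ∈ l) → (⋂ i, s i) ∈ l)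
    {t : TopologicalSpace α} {f : γ → α} {a : α} (hf : Tendsto f l (@nhds α t a)) :
    Tendsto f l (@nhds α (pModification t τ) a) := by
  rw [pModification, tendsto_nhds_generateFrom_iff]
  rintro _ ⟨ι, u, hι, hu, rfl⟩ ha
  rw [preimage_iInter]
  exact hl ι _ hι fun i => hf ((hu i).mem_nhds (mem_iInter.1 ha i))

theorem tendsto_twoSidedUnif_pModification {G γ : Type*} [Group G] [t : TopologicalSpace G]
    {l : Filter γ} {τ : Cardinal.{w}}
    (hl : ∀ (ι : Type w) (s : ι → Set γ), Cardinal.mk ι ≤ τ → (∀ i, s i ∈ l) → (⋂ i, s i) ∈ l)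
    {f : γ → G × G} (hf : Tendsto f l (twoSidedUnif G)) :
    Tendsto f l (@twoSidedUnif G _ (pModification t τ)) := by
  simp only [twoSidedUnif, leftUnif, rightUnif, tendsto_inf, tendsto_comap_iff] at hf ⊢
  exact ⟨tendsto_nhds_pModification hl hf.1, tendsto_nhds_pModification hl hf.2⟩

end PModification

theorem isPSpace_of_isOpen_iInter {X : Type u} [TopologicalSpace X] {τ : Cardinal.{u}}
    (hτ : Cardinal.aleph0 ≤ τ)
    (h : ∀ (ι : Type u) (s : ι → Set X), Cardinal.mk ι ≤ τ → (∀ i, IsOpen (s i)) →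
      IsOpen (⋂ i, s i)) :
    IsPSpace X := by
  intro s hs
  have := h (ULift ℕ) (fun n => s n.down) (by simpa using hτ) fun n => hs n.down
  rwa [ULift.down_surjective.iInter_comp s] at this

/-- if the uniformity of `X` is closed under τ-fold intersections, then so are
the open sets of the uniform free topological group `F(X, U)`; in particular it is a
P-group. -/
theorem uniformFree_tau_intersections (X : Type u) [UniformSpace X]
    [TopologicalSpace (FreeGroup X)] [IsTopologicalGroup (FreeGroup X)]
    (hF : IsUniformFreeTopGroup X) (τ : Cardinal.{u}) (hτ : Cardinal.aleph0 ≤ τ)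
    (hU : ∀ (ι : Type u) (s : ι → Set (X × X)), Cardinal.mk ι ≤ τ →
      (∀ i, s i ∈ uniformity X) → (⋂ i, s i) ∈ uniformity X) :
    (∀ (ι : Type u) (s : ι → Set (FreeGroup X)), Cardinal.mk ι ≤ τ →
      (∀ i, IsOpen (s i)) → IsOpen (⋂ i, s i)) ∧ IsPSpace (FreeGroup X) := by
  have hle := @hF.2 _ _ (pModification _ τ) (isTopologicalGroup_pModification τ) FreeGroup.of
    (tendsto_twoSidedUnif_pModification hU hF.1)
  rw [FreeGroup.lift_of_eq_id, MonoidHom.coe_id, continuous_id_iff_le] at hle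
  have hinter : ∀ (ι : Type u) (s : ι → Set (FreeGroup X)), Cardinal.mk ι ≤ τ →
      (∀ i, IsOpen (s i)) → IsOpen (⋂ i, s i) :=
    fun ι s hι hs => hle _ (isOpen_pModification_iInter _ hι hs)
  exact ⟨hinter, isPSpace_of_isOpen_iInter hτ hinter⟩
end

section
/- Let (X, U) be a uniform P-space that is ℵ₀-narrow. Then the uniform free topological group F(X, U) has a base at the identity consisting of open normal subgroups; in particular it is balanced and coincides with the free non-archimedean balanced group over (X, U). -/
open Filter Set Topology Pointwise

universe u v

/-! `F(X)` is generated by `of '' X`, which is `ℵ₀`-narrow by uniform continuity of `of`, and so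
is `F(X)` itself (Guran). In an `ℵ₀`-narrow group every neighbourhood `W` of `1` contains the
normal closure of the intersection of countably many neighbourhoods of `1`. Pulling these back
along `(x, y) ↦ (of x)⁻¹ * of y` gives countably many entourages, and since `X` is a uniform
`P`-space their intersection contains an entourage `r` that is an equivalence relation. The
kernel of `F(X) → F(X/r)` is open by the universal property (with `F(X/r)` discrete) and is the
normal closure of relators `(of x)⁻¹ * of y` with `r x y`, so it lies in `W`. A base of open
normal subgroups at `1` makes the left and right uniformities coincide. -/

open scoped Uniformity SetRel

theorem exists_seq_of_forall_exists {α : Type*} {p : α → Prop} {r : α → α → Prop}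
    (h : ∀ a, p a → ∃ b, p b ∧ r a b) {a : α} (ha : p a) :
    ∃ f : ℕ → α, f 0 = a ∧ ∀ n, p (f n) ∧ r (f n) (f (n + 1)) := by
  choose! g hg using h
  have hp : ∀ n, p (g^[n] a) := fun n => by
    induction n with
    | zero => exact ha
    | succ n ih => rw [Function.iterate_succ_apply']; exact (hg _ ih).1
  refine ⟨fun n => g^[n] a, rfl, fun n => ⟨hp n, ?_⟩⟩
  simp only [Function.iterate_succ_apply']
  exact (hg _ (hp n)).2

section Chain

variable {G : Type*} [Group G]

theorem closure_subset_iInter_of_mul_subset {V : ℕ → Set G} (hone : ∀ n, (1 : G) ∈ V n)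
    (hinv : ∀ n, (V n)⁻¹ ⊆ V n) (hmul : ∀ n, V (n + 1) * V (n + 1) ⊆ V n) {s : Set G}
    (hs : s ⊆ ⋂ n, V n) : (Subgroup.closure s : Set G) ⊆ ⋂ n, V n := by
  intro g hg
  induction hg using Subgroup.closure_induction with
  | mem x hx => exact hs hx
  | one => exact mem_iInter.2 hone
  | mul x y _ _ hx hy =>
    exact mem_iInter.2 fun n =>
      hmul n (mul_mem_mul (mem_iInter.1 hx (n + 1)) (mem_iInter.1 hy (n + 1)))
  | inv x _ hx => exact mem_iInter.2 fun n => hinv n (inv_mem_inv.2 (mem_iInter.1 hx n))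

theorem exists_seq_nhds_one_inv_eq_mul_subset [TopologicalSpace G] [IsTopologicalGroup G]
    {W : Set G} (hW : W ∈ 𝓝 (1 : G)) :
    ∃ V : ℕ → Set G, V 0 ⊆ W ∧ ∀ n, V n ∈ 𝓝 (1 : G) ∧ (V n)⁻¹ = V n ∧
      V (n + 1) * V (n + 1) ⊆ V n := by
  obtain ⟨V₀, hV₀, -, hV₀inv, hV₀W⟩ := exists_closed_nhds_one_inv_eq_mul_subset hW
  obtain ⟨V, rfl, hV⟩ := exists_seq_of_forall_exists
    (p := fun V : Set G => V ∈ 𝓝 (1 : G) ∧ V⁻¹ = V) (r := fun U V => V * V ⊆ U)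
    (fun _ ⟨hU, _⟩ => let ⟨V, hV, _, hVinv, hVU⟩ := exists_closed_nhds_one_inv_eq_mul_subset hU
      ⟨V, ⟨hV, hVinv⟩, hVU⟩) ⟨hV₀, hV₀inv⟩
  exact ⟨V, (subset_mul_left _ (mem_of_mem_nhds hV₀)).trans hV₀W, fun n =>
    ⟨(hV n).1.1, (hV n).1.2, (hV n).2⟩⟩

end Chain

section PSpace

variable {X : Type*} [UniformSpace X]

theorem IsUniformPSpace.countableInterFilter (hP : IsUniformPSpace X) :
    CountableInterFilter (𝓤 X) where
  countable_sInter_mem S hS hmem := by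
    rcases S.eq_empty_or_nonempty with rfl | hne
    · simp
    obtain ⟨s, rfl⟩ := hS.exists_eq_range hne
    rw [sInter_range]
    exact hP s fun n => hmem _ (mem_range_self n)

/-- The intersection of a chain `δ₀ ⊇ δ₁ ○ δ₁ ⊇ …` of symmetric entourages is an entourage that
is an equivalence relation. -/
theorem IsUniformPSpace.isUltraUniformity (hP : IsUniformPSpace X) : IsUltraUniformity X := by
  have := hP.countableInterFilter
  refine ⟨⟨fun ε => ⟨fun hε => ?_, fun ⟨η, hη, hηε⟩ => mem_of_superset hη.1 hηε⟩⟩⟩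
  obtain ⟨δ, hδ0, hδ⟩ := exists_seq_of_forall_exists
    (p := fun s : SetRel X X => s ∈ 𝓤 X ∧ s.IsSymm) (r := fun s t => t ○ t ⊆ s)
    (fun _ ⟨hs, _⟩ => let ⟨t, ht, hts, htt⟩ := comp_symm_mem_uniformity_sets hs
      ⟨t, ⟨ht, hts⟩, htt⟩)
    ⟨symmetrize_mem_uniformity hε, inferInstance⟩
  have := fun n => (hδ n).1.2
  refine ⟨⋂ n, δ n, ⟨countable_iInter_mem.2 fun n => (hδ n).1.1, inferInstance, ⟨?_⟩⟩, ?_⟩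
  · intro x y z hxy hyz
    exact mem_iInter.2 fun n =>
      (hδ n).2 (SetRel.prodMk_mem_comp (mem_iInter.1 hxy (n + 1)) (mem_iInter.1 hyz (n + 1)))
  · exact (iInter_subset δ 0).trans (hδ0 ▸ SetRel.symmetrize_subset_self)

theorem IsUltraUniformity.exists_setoid_subset [IsUltraUniformity X] {ε : Set (X × X)}
    (hε : ε ∈ 𝓤 X) :
    ∃ r : Setoid X, {p : X × X | r p.1 p.2} ∈ 𝓤 X ∧ {p : X × X | r p.1 p.2} ⊆ ε := by
  obtain ⟨V, ⟨hV, _, _⟩, hVε⟩ := IsUltraUniformity.hasBasis.mem_iff.1 hε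
  exact ⟨⟨fun x y => (x, y) ∈ V, ⟨fun x => refl_mem_uniformity hV, fun h => V.symm h,
    fun h₁ h₂ => V.trans h₁ h₂⟩⟩, hV, hVε⟩

end PSpace

section NarrowGroup

variable {G : Type*} [Group G] [TopologicalSpace G]

def IsAleph0Narrow (s : Set G) : Prop :=
  ∀ V ∈ 𝓝 (1 : G), ∃ C : Set G, C.Countable ∧ s ⊆ V * C

theorem IsAleph0Narrow.mono {s t : Set G} (hs : IsAleph0Narrow s) (hts : t ⊆ s) :
    IsAleph0Narrow t :=
  fun V hV => let ⟨C, hC, hsC⟩ := hs V hV; ⟨C, hC, hts.trans hsC⟩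

theorem isAleph0Narrow_one : IsAleph0Narrow (1 : Set G) :=
  fun V hV => ⟨1, countable_singleton 1, by simpa using mem_of_mem_nhds hV⟩

theorem IsAleph0Narrow.iUnion {ι : Sort*} [Countable ι] {s : ι → Set G}
    (hs : ∀ i, IsAleph0Narrow (s i)) : IsAleph0Narrow (⋃ i, s i) := by
  intro V hV
  choose C hC hsC using fun i => hs i V hV
  exact ⟨⋃ i, C i, countable_iUnion hC,
    iUnion_subset fun i => (hsC i).trans (mul_subset_mul_left (subset_iUnion C i))⟩

theorem IsAleph0Narrow.union {s t : Set G} (hs : IsAleph0Narrow s) (ht : IsAleph0Narrow t) :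
    IsAleph0Narrow (s ∪ t) := by
  rw [union_eq_iUnion]
  exact IsAleph0Narrow.iUnion fun b => by cases b <;> assumption

variable [IsTopologicalGroup G]

/-- If `s ⊆ U * B` and `t ⊆ (b⁻¹ U b) * A_b` for `b ∈ B`, then `s * t ⊆ (U * U) * ⋃ b, b • A_b`,
because `u b w a = u (b w b⁻¹) (b a)`. -/
theorem IsAleph0Narrow.mul {s t : Set G} (hs : IsAleph0Narrow s) (ht : IsAleph0Narrow t) :
    IsAleph0Narrow (s * t) := by
  intro V hV
  obtain ⟨U, hU, hUU⟩ := exists_nhds_one_split hV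
  obtain ⟨B, hB, hsB⟩ := hs U hU
  have hconj : ∀ b : G, (fun z => b * z * b⁻¹) ⁻¹' U ∈ 𝓝 (1 : G) := fun b =>
    (by fun_prop : Continuous fun z : G => b * z * b⁻¹).continuousAt.preimage_mem_nhds
      (by simpa using hU)
  choose A hA htA using fun b => ht _ (hconj b)
  refine ⟨⋃ b ∈ B, b • A b, hB.biUnion fun b _ => (hA b).image _, ?_⟩
  rintro _ ⟨x, hx, y, hy, rfl⟩
  obtain ⟨u, hu, b, hb, rfl⟩ := hsB hx
  obtain ⟨w, hw, a, ha, rfl⟩ := htA b hy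
  refine ⟨u * (b * w * b⁻¹), hUU u hu _ hw, b * a, mem_biUnion hb (smul_mem_smul_set ha), ?_⟩
  group

theorem IsAleph0Narrow.pow {s : Set G} (hs : IsAleph0Narrow s) (n : ℕ) :
    IsAleph0Narrow (s ^ n) := by
  induction n with
  | zero => simpa using isAleph0Narrow_one
  | succ n ih => rw [pow_succ]; exact ih.mul hs

theorem IsAleph0Narrow.closure {s : Set G} (hs : IsAleph0Narrow s) (hs' : IsAleph0Narrow s⁻¹) :
    IsAleph0Narrow (Subgroup.closure s : Set G) := by
  refine (IsAleph0Narrow.iUnion fun n => (hs.union hs').pow n).mono fun g hg => ?_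
  rw [SetLike.mem_coe, ← Subgroup.mem_toSubmonoid, Subgroup.closure_toSubmonoid] at hg
  induction hg using Submonoid.closure_induction with
  | mem x hx => exact mem_iUnion.2 ⟨1, by simpa using hx⟩
  | one => exact mem_iUnion.2 ⟨0, by simp⟩
  | mul x y _ _ hx hy =>
    obtain ⟨m, hm⟩ := mem_iUnion.1 hx
    obtain ⟨n, hn⟩ := mem_iUnion.1 hy
    exact mem_iUnion.2 ⟨m + n, pow_add (s ∪ s⁻¹) m n ▸ mul_mem_mul hm hn⟩

theorem isAleph0Narrow_range {X : Type*} [UniformSpace X]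
    (hX : ∀ ε ∈ 𝓤 X, ∃ f : ℕ → X, ∀ x : X, ∃ n : ℕ, (f n, x) ∈ ε) {φ : X → G}
    (hφ : Tendsto (Prod.map φ φ) (𝓤 X) (rightUnif G)) : IsAleph0Narrow (range φ) := by
  intro V hV
  obtain ⟨f, hf⟩ := hX _ (hφ (preimage_mem_comap (inv_mem_nhds_one G hV)))
  refine ⟨range (φ ∘ f), countable_range _, ?_⟩
  rintro _ ⟨x, rfl⟩
  obtain ⟨n, hn⟩ := hf x
  exact ⟨(φ (f n) * (φ x)⁻¹)⁻¹, hn, φ (f n), mem_range_self n, by group⟩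

theorem isAleph0Narrow_inv_range {X : Type*} [UniformSpace X]
    (hX : ∀ ε ∈ 𝓤 X, ∃ f : ℕ → X, ∀ x : X, ∃ n : ℕ, (f n, x) ∈ ε) {φ : X → G}
    (hφ : Tendsto (Prod.map φ φ) (𝓤 X) (leftUnif G)) : IsAleph0Narrow (range φ)⁻¹ := by
  rw [inv_range]
  refine isAleph0Narrow_range hX (tendsto_comap_iff.2 ?_)
  refine (tendsto_comap_iff.1 hφ).congr fun p => ?_
  simp

/-- Every conjugate `g r g⁻¹` of `r ∈ ⋂₀ 𝒰` lies in `V n`: write `g = v c` with `v ∈ V (n + 2)`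
and `c` in a countable set `C n`, and put `c⁻¹ V (n + 2) c` into `𝒰`. -/
theorem IsAleph0Narrow.exists_countable_normalClosure_subset
    (hG : IsAleph0Narrow (univ : Set G)) {W : Set G} (hW : W ∈ 𝓝 (1 : G)) :
    ∃ 𝒰 : Set (Set G), 𝒰.Countable ∧ (∀ U ∈ 𝒰, U ∈ 𝓝 (1 : G)) ∧
      (Subgroup.normalClosure (⋂₀ 𝒰) : Set G) ⊆ W := by
  obtain ⟨V, hV0, hV⟩ := exists_seq_nhds_one_inv_eq_mul_subset hW
  have hVmono : ∀ n, V (n + 1) ⊆ V n := fun n =>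
    (subset_mul_left _ (mem_of_mem_nhds (hV (n + 1)).1)).trans (hV n).2.2
  choose C hC hGC using fun n => hG (V (n + 2)) (hV (n + 2)).1
  refine ⟨⋃ n, (fun c => (fun r => c * r * c⁻¹) ⁻¹' V (n + 2)) '' C n,
    countable_iUnion fun n => (hC n).image _, ?_, ?_⟩
  · simp only [mem_iUnion, mem_image]
    rintro _ ⟨n, c, -, rfl⟩
    exact (by fun_prop : Continuous fun r : G => c * r * c⁻¹).continuousAt.preimage_mem_nhds
      (by simpa using (hV (n + 2)).1)
  refine subset_trans ?_ (iInter_subset V 0 |>.trans hV0)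
  refine closure_subset_iInter_of_mul_subset (fun n => mem_of_mem_nhds (hV n).1)
    (fun n => (hV n).2.1.subset) (fun n => (hV n).2.2) fun a ha => mem_iInter.2 fun n => ?_
  obtain ⟨r, hr, hconj⟩ := Group.mem_conjugatesOfSet_iff.1 ha
  obtain ⟨g, rfl⟩ := isConj_iff.1 hconj
  obtain ⟨v, hv, c, hc, rfl⟩ := hGC n (mem_univ g)
  have hcr : c * r * c⁻¹ ∈ V (n + 2) :=
    mem_sInter.1 hr _ (mem_iUnion.2 ⟨n, c, hc, rfl⟩)
  have hv' : v⁻¹ ∈ V (n + 1) := hVmono _ ((hV (n + 2)).2.1 ▸ inv_mem_inv.2 hv)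
  have := (hV n).2.2 (mul_mem_mul ((hV (n + 1)).2.2 (mul_mem_mul hv hcr)) hv')
  simpa [mul_assoc] using this

end NarrowGroup

theorem leftUnif_eq_rightUnif_of_normal_base {G : Type*} [Group G] [TopologicalSpace G]
    (h : ∀ W ∈ 𝓝 (1 : G), ∃ H : Subgroup G, H.Normal ∧ IsOpen (H : Set G) ∧ (H : Set G) ⊆ W) :
    leftUnif G = rightUnif G := by
  have hbasis : (𝓝 (1 : G)).HasBasis (fun H : Subgroup G => H.Normal ∧ IsOpen (H : Set G))
      (fun H => (H : Set G)) :=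
    ⟨fun W => ⟨fun hW => let ⟨H, hn, ho, hW⟩ := h W hW; ⟨H, ⟨hn, ho⟩, hW⟩,
      fun ⟨H, ⟨_, ho⟩, hW⟩ => mem_of_superset (ho.mem_nhds H.one_mem) hW⟩⟩
  refine (hbasis.comap _).eq_of_same_basis ((hbasis.comap _).to_hasBasis
    (fun H hH => ⟨H, hH, fun p hp => ?_⟩) fun H hH => ⟨H, hH, fun p hp => ?_⟩)
  · exact hH.1.mem_comm_iff.1 (by simpa using H.inv_mem hp)
  · simpa using H.inv_mem (hH.1.mem_comm_iff.1 hp)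

namespace FreeGroup

variable {X : Type u}

theorem ker_map_quotient_le_normalClosure (r : Setoid X) :
    (map (Quotient.mk r)).ker ≤
      Subgroup.normalClosure {z | ∃ x y, r x y ∧ z = (of x)⁻¹ * of y} := by
  set N := Subgroup.normalClosure {z : FreeGroup X | ∃ x y, r x y ∧ z = (of x)⁻¹ * of y}
  have hresp : ∀ x y : X, r x y → (of x : FreeGroup X ⧸ N) = of y := fun x y hxy =>
    QuotientGroup.eq.2 (Subgroup.subset_normalClosure ⟨x, y, hxy, rfl⟩)
  have hfactor : (lift (Quotient.lift (fun x => (of x : FreeGroup X ⧸ N)) hresp)).comp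
      (map (Quotient.mk r)) = QuotientGroup.mk' N := ext_hom _ _ fun _ => rfl
  intro w hw
  rw [← QuotientGroup.ker_mk' N, ← hfactor, MonoidHom.mem_ker, MonoidHom.comp_apply, hw,
    _root_.map_one]

variable [UniformSpace X] [TopologicalSpace (FreeGroup X)] [IsTopologicalGroup (FreeGroup X)]

theorem isOpen_ker_map_quotient (hF : IsUniformFreeTopGroup X) {r : Setoid X}
    (hr : {p : X × X | r p.1 p.2} ∈ 𝓤 X) :
    IsOpen ((map (Quotient.mk r)).ker : Set (FreeGroup X)) := by
  let : TopologicalSpace (FreeGroup (Quotient r)) := ⊥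
  have : DiscreteTopology (FreeGroup (Quotient r)) := ⟨rfl⟩
  have hconst : ∀ᶠ p in 𝓤 X, of (Quotient.mk r p.1) = of (Quotient.mk r p.2) :=
    mem_of_superset hr fun p hp => congrArg of (Quotient.sound hp)
  have hnhds : 𝓝 (1 : FreeGroup (Quotient r)) = pure 1 := congrFun (nhds_discrete _) 1
  have hcont := hF.2 _ (of ∘ Quotient.mk r) <| tendsto_inf.2
    ⟨tendsto_comap_iff.2 <| hnhds ▸ tendsto_pure.2 <| hconst.mono fun p hp => by simp [hp],
      tendsto_comap_iff.2 <| hnhds ▸ tendsto_pure.2 <| hconst.mono fun p hp => by simp [hp]⟩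
  rw [← map_eq_lift] at hcont
  exact hcont.isOpen_preimage {1} (isOpen_discrete _)

theorem isAleph0Narrow_univ
    (hX : ∀ ε ∈ 𝓤 X, ∃ f : ℕ → X, ∀ x : X, ∃ n : ℕ, (f n, x) ∈ ε)
    (hof : Tendsto (Prod.map (of : X → FreeGroup X) of) (𝓤 X) (twoSidedUnif (FreeGroup X))) :
    IsAleph0Narrow (univ : Set (FreeGroup X)) := by
  have hclosure := (isAleph0Narrow_range hX (tendsto_inf.1 hof).2).closure
    (isAleph0Narrow_inv_range hX (tendsto_inf.1 hof).1)
  rwa [closure_range_of, Subgroup.coe_top] at hclosure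

theorem exists_normal_isOpen_subgroup_subset (hP : IsUniformPSpace X)
    (hX : ∀ ε ∈ 𝓤 X, ∃ f : ℕ → X, ∀ x : X, ∃ n : ℕ, (f n, x) ∈ ε)
    (hF : IsUniformFreeTopGroup X) {W : Set (FreeGroup X)} (hW : W ∈ 𝓝 1) :
    ∃ H : Subgroup (FreeGroup X), H.Normal ∧ IsOpen (H : Set (FreeGroup X)) ∧
      (H : Set (FreeGroup X)) ⊆ W := by
  have := hP.countableInterFilter
  have := hP.isUltraUniformity
  obtain ⟨𝒰, h𝒰, h𝒰nhds, h𝒰W⟩ :=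
    (isAleph0Narrow_univ hX hF.1).exists_countable_normalClosure_subset hW
  have hleft := tendsto_comap_iff.1 (tendsto_inf.1 hF.1).1
  obtain ⟨r, hr, hrε⟩ := IsUltraUniformity.exists_setoid_subset
    ((countable_bInter_mem h𝒰).2 fun U hU => hleft (h𝒰nhds U hU))
  refine ⟨(map (Quotient.mk r)).ker, MonoidHom.normal_ker _, isOpen_ker_map_quotient hF hr,
    (SetLike.coe_subset_coe.2 <| (ker_map_quotient_le_normalClosure r).trans
      (Subgroup.normalClosure_mono ?_)).trans h𝒰W⟩
  rintro _ ⟨x, y, hxy, rfl⟩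
  exact mem_sInter.2 fun U hU => mem_iInter₂.1 (hrε (a := (x, y)) hxy) U hU

end FreeGroup

/-- over an ℵ₀-narrow uniform P-space, the uniform free topological group
has a base at the identity of open normal subgroups; in particular it is balanced and
coincides with the free non-archimedean balanced group. -/
theorem uniformFree_narrow_pSpace (X : Type u) [UniformSpace X]
    [TopologicalSpace (FreeGroup X)] [IsTopologicalGroup (FreeGroup X)]
    (hP : IsUniformPSpace X)
    (hnarrow : ∀ ε ∈ uniformity X, ∃ f : ℕ → X, ∀ x : X, ∃ n : ℕ, (f n, x) ∈ ε)
    (hF : IsUniformFreeTopGroup X) :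
    (∀ W ∈ nhds (1 : FreeGroup X), ∃ H : Subgroup (FreeGroup X), H.Normal ∧
      IsOpen (H : Set (FreeGroup X)) ∧ (H : Set (FreeGroup X)) ⊆ W) ∧
    leftUnif (FreeGroup X) = rightUnif (FreeGroup X) ∧
    IsFreeNABalancedGroup X := by
  have hbase := fun W (hW : W ∈ 𝓝 (1 : FreeGroup X)) =>
    FreeGroup.exists_normal_isOpen_subgroup_subset hP hnarrow hF hW
  have hbalanced := leftUnif_eq_rightUnif_of_normal_base hbase
  refine ⟨hbase, hbalanced, fun W hW => ?_, hbalanced, hF.1,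
    fun G _ _ _ φ _ _ hφ => hF.2 G φ hφ⟩
  obtain ⟨H, -, hH, hHW⟩ := hbase W hW
  exact ⟨H, hH, hHW⟩
end

section
/- Let (X, U) be a uniform P-space and F(X, U) the uniform free topological group; let Bₙ denote the set of words of length at most n in the free group F(X). Then F(X, U) is balanced if and only if for every n ∈ ℕ the left and right uniformities of F(X, U) induce the same trace uniformity on Bₙ. -/
/-!
Over a uniform P-space the free group is a P-group. The countable intersections of
neighbourhoods of `1` are the neighbourhoods of `1` of a finer group topology (the
P-modification); the generators stay uniformly embedded for it because the uniformity of `X`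
is closed under countable intersections, so the universal property makes the identity
continuous into it and the two topologies coincide. Hence both one-sided uniformities are
closed under countable intersections, and an entourage of one of them is the intersection of
the countably many entourages of the other that have the same trace on the balls `Bₙ`, which
exhaust the free group.
-/

open Filter Set Topology Pointwise

universe u v

namespace Filter

variable {α β : Type*}

theorem countableInterFilter_of_iInter_nat_mem {l : Filter α}
    (h : ∀ s : ℕ → Set α, (∀ n, s n ∈ l) → (⋂ n, s n) ∈ l) : CountableInterFilter l where
  countable_sInter_mem S hS hSl := by
    rcases S.eq_empty_or_nonempty with rfl | hne
    · simp
    obtain ⟨s, rfl⟩ := hS.exists_eq_range hne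
    rw [sInter_range]
    exact h s fun n => hSl _ (mem_range_self n)

theorem countableGenerate_sets_le (g : Filter α) : countableGenerate g.sets ≤ g :=
  fun _ hs => CountableGenerateSets.basic hs

theorem tendsto_countableGenerate_iff {l : Filter α} [CountableInterFilter l] {g : Filter β}
    {f : α → β} : Tendsto f l (countableGenerate g.sets) ↔ Tendsto f l g :=
  le_countableGenerate_iff_of_countableInterFilter

instance countableInterFilter_prod {l : Filter α} {g : Filter β} [CountableInterFilter l]
    [CountableInterFilter g] : CountableInterFilter (l ×ˢ g) := by
  rw [prod_eq_inf]
  infer_instance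

theorem Tendsto.countableGenerate {l : Filter α} {g : Filter β} {f : α → β}
    (h : Tendsto f l g) : Tendsto f (countableGenerate l.sets) (countableGenerate g.sets) :=
  tendsto_countableGenerate_iff.2 (h.mono_left (countableGenerate_sets_le l))

end Filter

theorem IsUniformPSpace.countableInterFilter_s14 {X : Type*} [UniformSpace X]
    (hP : IsUniformPSpace X) : CountableInterFilter (uniformity X) :=
  countableInterFilter_of_iInter_nat_mem hP

section PModification

variable (G : Type*) [Group G] [TopologicalSpace G] [IsTopologicalGroup G]

abbrev pModificationBasis : GroupFilterBasis G where
  toFilterBasis := (countableGenerate (𝓝 (1 : G)).sets).asBasis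
  one' {U} hU := by
    obtain ⟨S, hSn, -, hSU⟩ := mem_countableGenerate_iff.1 hU
    exact hSU fun V hV => mem_of_mem_nhds (hSn hV)
  mul' {U} hU := by
    have hle := countableGenerate_sets_le (𝓝 (1 : G))
    have hmul : Tendsto (fun p : G × G => p.1 * p.2)
        (countableGenerate (𝓝 (1 : G)).sets ×ˢ countableGenerate (𝓝 (1 : G)).sets)
        (countableGenerate (𝓝 (1 : G)).sets) := by
      refine tendsto_countableGenerate_iff.2 ?_
      simpa using (tendsto_fst.mono_right hle).mul (tendsto_snd.mono_right hle)
    obtain ⟨V, hV, hVU⟩ := mem_prod_self_iff.1 (hmul hU)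
    exact ⟨V, hV, mul_subset_iff.2 fun a ha b hb => hVU (mk_mem_prod ha hb)⟩
  inv' {U} hU :=
    ⟨_, (continuous_inv.tendsto' (1 : G) 1 inv_one).countableGenerate hU, subset_rfl⟩
  conj' x₀ {U} hU := by
    have hconj : Continuous fun x : G => x₀ * x * x₀⁻¹ := by fun_prop
    exact ⟨_, (hconj.tendsto' 1 1 (by group)).countableGenerate hU, subset_rfl⟩

theorem nhds_one_pModification :
    @nhds G (pModificationBasis G).topology 1 = countableGenerate (𝓝 (1 : G)).sets :=
  ((pModificationBasis G).nhds_one_eq).trans (asBasis_filter _)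

variable {G}

theorem Filter.Tendsto.twoSidedUnif_pModification {α : Type*} {l : Filter (α × α)}
    [CountableInterFilter l] {φ : α → G} (h : Tendsto (Prod.map φ φ) l (twoSidedUnif G)) :
    Tendsto (Prod.map φ φ) l (@twoSidedUnif G _ (pModificationBasis G).topology) := by
  simpa only [twoSidedUnif, leftUnif, rightUnif, tendsto_inf, tendsto_comap_iff,
    nhds_one_pModification, tendsto_countableGenerate_iff] using h

theorem countableInterFilter_nhds_one_of_continuous_pModification
    (h : Continuous[‹TopologicalSpace G›, (pModificationBasis G).topology] id) :
    CountableInterFilter (𝓝 (1 : G)) := by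
  have hle : 𝓝 (1 : G) ≤ countableGenerate (𝓝 (1 : G)).sets :=
    nhds_one_pModification G ▸ nhds_mono (continuous_id_iff_le.1 h)
  rw [le_antisymm hle (countableGenerate_sets_le _)]
  infer_instance

instance [CountableInterFilter (𝓝 (1 : G))] : CountableInterFilter (leftUnif G) :=
  inferInstanceAs (CountableInterFilter (comap _ _))

instance [CountableInterFilter (𝓝 (1 : G))] : CountableInterFilter (rightUnif G) :=
  inferInstanceAs (CountableInterFilter (comap _ _))

end PModification

theorem le_of_forall_memTrace_imp {α : Type*} {μ ν : Filter (α × α)} [CountableInterFilter ν]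
    {B : ℕ → Set α} (hB : ∀ p : α × α, ∃ n, p ∈ B n ×ˢ B n)
    (h : ∀ n ε, MemTrace μ (B n) ε → MemTrace ν (B n) ε) : ν ≤ μ := by
  intro δ hδ
  choose δ' hδ' htrace using fun n => h n δ ⟨δ, hδ, rfl⟩
  refine mem_of_superset (countable_iInter_mem.2 hδ') fun p hp => ?_
  obtain ⟨n, hn⟩ := hB p
  have hpn : p ∈ δ' n ∩ B n ×ˢ B n := ⟨mem_iInter.1 hp n, hn⟩
  rw [htrace n] at hpn
  exact hpn.1

section FreeGroup

variable {X : Type u} [UniformSpace X] [TopologicalSpace (FreeGroup X)]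
  [IsTopologicalGroup (FreeGroup X)]

theorem IsUniformFreeTopGroup.countableInterFilter_nhds_one (hP : IsUniformPSpace X)
    (hF : IsUniformFreeTopGroup X) : CountableInterFilter (𝓝 (1 : FreeGroup X)) := by
  have := hP.countableInterFilter_s14
  have h := @hF.2 (FreeGroup X) _ (pModificationBasis (FreeGroup X)).topology
    (pModificationBasis (FreeGroup X)).isTopologicalGroup FreeGroup.of
    hF.1.twoSidedUnif_pModification
  rw [FreeGroup.lift_of_eq_id] at h
  exact countableInterFilter_nhds_one_of_continuous_pModification h

end FreeGroup

theorem exists_mem_Bword_prod {X : Type*} [DecidableEq X] (p : FreeGroup X × FreeGroup X) :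
    ∃ n, p ∈ Bword X n ×ˢ Bword X n :=
  ⟨_, le_max_left p.1.toWord.length p.2.toWord.length,
    le_max_right p.1.toWord.length p.2.toWord.length⟩

/-- over a uniform P-space, the uniform free topological group is balanced iff
the left and right uniformities induce the same trace on each ball `Bₙ`. -/
theorem uniformFree_balanced_iff_traces (X : Type u) [UniformSpace X] [DecidableEq X]
    [TopologicalSpace (FreeGroup X)] [IsTopologicalGroup (FreeGroup X)]
    (hP : IsUniformPSpace X) (hF : IsUniformFreeTopGroup X) :
    leftUnif (FreeGroup X) = rightUnif (FreeGroup X) ↔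
      ∀ (n : ℕ) (ε : Set (FreeGroup X × FreeGroup X)),
        MemTrace (leftUnif (FreeGroup X)) (Bword X n) ε ↔
          MemTrace (rightUnif (FreeGroup X)) (Bword X n) ε := by
  refine ⟨fun h n ε => by rw [h], fun h => ?_⟩
  have := hF.countableInterFilter_nhds_one hP
  exact le_antisymm (le_of_forall_memTrace_imp exists_mem_Bword_prod fun n ε => (h n ε).2)
    (le_of_forall_memTrace_imp exists_mem_Bword_prod fun n ε => (h n ε).1)
end
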